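/- Let n ≥ 1, let Ω ⊂ ℝⁿ be nonempty open and let A ⊂ ℝⁿ. If P_Ω(A) = ∞, then the set {τ ∈ ℝⁿ : P_{Ω,τ}(A) < ∞} is contained in an (n−1)-dimensional linear subspace of ℝⁿ. -/

import Mathlib

open MeasureTheory Metric Filter Set ENNReal
open scoped Topology NNReal ENNReal symmDiff

noncomputable section
attribute [local instance] Classical.propDecidable

abbrev Euc (n : ℕ) := EuclideanSpace ℝ (Fin n)

variable {n : ℕ}

/-- Upper outer density of `A` at `x`. -/
def upperDens (A : Set (Euc n)) (x : Euc n) : ℝ≥0∞ :=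
  limsup (fun r : ℝ => volume (A ∩ closedBall x r) / volume (closedBall x r)) (𝓝[>] 0)

def essInterior (A : Set (Euc n)) : Set (Euc n) := {x | upperDens Aᶜ x = 0}

def essBoundary (A : Set (Euc n)) : Set (Euc n) :=
  {x | 0 < upperDens A x ∧ 0 < upperDens Aᶜ x}

def prepInterior (A : Set (Euc n)) : Set (Euc n) := {x | upperDens Aᶜ x < 1/2}

def prepBoundary (A : Set (Euc n)) : Set (Euc n) :=
  {x | 1/2 ≤ upperDens A x ∧ 1/2 ≤ upperDens Aᶜ x}

def IsTestFun (Ω : Set (Euc n)) (φ : Euc n → ℝ) : Prop :=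
  ContDiff ℝ (⊤ : ℕ∞) φ ∧ HasCompactSupport φ ∧ tsupport φ ⊆ Ω

def IsTestField (Ω : Set (Euc n)) (ψ : Euc n → Euc n) : Prop :=
  ContDiff ℝ (⊤ : ℕ∞) ψ ∧ HasCompactSupport ψ ∧ tsupport ψ ⊆ Ω

/-- divergence of a vector field -/
def divg (ψ : Euc n → Euc n) (x : Euc n) : ℝ :=
  ∑ i, fderiv ℝ ψ x (EuclideanSpace.single i 1) i

/-- Variation of `A` in `Ω` at direction `τ`. -/
def dirVar (Ω A : Set (Euc n)) (τ : Euc n) : ℝ≥0∞ :=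
  if NullMeasurableSet (A ∩ Ω) volume then
    ⨆ (φ : Euc n → ℝ) (_ : IsTestFun Ω φ ∧ ∀ x, |φ x| ≤ 1),
      ENNReal.ofReal (∫ x in Ω, A.indicator (fun _ => (1:ℝ)) x * fderiv ℝ φ x τ)
  else ⊤

/-- Perimeter of `A` in `Ω`. -/
def perim (Ω A : Set (Euc n)) : ℝ≥0∞ :=
  if NullMeasurableSet (A ∩ Ω) volume then
    ⨆ (ψ : Euc n → Euc n) (_ : IsTestField Ω ψ ∧ ∀ x, ‖ψ x‖ ≤ 1),
      ENNReal.ofReal (∫ x in Ω, A.indicator (fun _ => (1:ℝ)) x * divg ψ x)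
  else ⊤

/-- Carathéodory's construction (method II) from a set function `m`
defined on a covering family `F`. -/
def carathII {X : Type*} [EMetricSpace X] (m : Set X → ℝ≥0∞) (F : Set (Set X)) (E : Set X) :
    ℝ≥0∞ :=
  ⨆ (δ : ℝ≥0∞) (_ : 0 < δ),
    ⨅ (t : ℕ → Set X) (_ : E ⊆ ⋃ i, t i) (_ : ∀ i, t i ∈ F ∧ EMetric.diam (t i) ≤ δ),
      ∑' i, m (t i)

/-- orthogonal projection onto the hyperplane orthogonal to `τ` -/
def projFn (τ : Euc n) (x : Euc n) : Euc n := (Submodule.orthogonalProjection (ℝ ∙ τ)ᗮ x : Euc n)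

/-- The projection measure `μ_τ`. -/
def muProj (τ : Euc n) (E : Set (Euc n)) : ℝ≥0∞ :=
  carathII (fun B => μH[(n : ℝ) - 1] (projFn τ '' B)) {B | MeasurableSet B} E

/-- volume of the unit ball in `ℝ^k` -/
def unitBallVol (k : ℕ) : ℝ := Real.pi ^ ((k : ℝ) / 2) / Real.Gamma ((k : ℝ) / 2 + 1)

/-- The integralgeometric measure `I^{n-1}_1`. -/
def intGeom (n : ℕ) (E : Set (Euc n)) : ℝ≥0∞ :=
  carathII (fun B => (ENNReal.ofReal (2 * unitBallVol (n - 1)))⁻¹ *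
      ∫⁻ τ in sphere (0 : Euc n) 1, μH[(n : ℝ) - 1] (projFn τ '' B) ∂μH[(n : ℝ) - 1])
    {B | MeasurableSet B} E

/-- The line through `z` in direction `τ`. -/
def lineThrough (z τ : Euc n) : Set (Euc n) := {y | ∃ t : ℝ, y = z + t • τ}

/-- The set `M^A_{Ω,τ}(z)` of hits of `L_τ(z) ∩ Ω` on `A`. -/
def hits (Ω A : Set (Euc n)) (τ z : Euc n) : Set (Euc n) :=
  {x ∈ lineThrough z τ ∩ Ω | ∀ r > (0:ℝ),
    0 < μH[(1:ℝ)] ((lineThrough z τ ∩ Ω) ∩ A ∩ ball x r) ∧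
    0 < μH[(1:ℝ)] (((lineThrough z τ ∩ Ω) \ A) ∩ ball x r)}

/-- `m^A_{Ω,τ}(z)`, the number of hits. -/
def mHits (Ω A : Set (Euc n)) (τ z : Euc n) : ℝ≥0∞ := (hits Ω A τ z).encard

/-- Integral of a function against a (finite) signed Borel measure. -/
def sintegral (s : SignedMeasure (Euc n)) (φ : Euc n → ℝ) : ℝ :=
  ∫ x, φ x ∂s.toJordanDecomposition.posPart - ∫ x, φ x ∂s.toJordanDecomposition.negPart

/-- A signed measure is concentrated on `Ω` (i.e. it is a measure "on `Ω`"). -/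
def VanishesOff (Ω : Set (Euc n)) (s : SignedMeasure (Euc n)) : Prop :=
  ∀ E, MeasurableSet E → E ⊆ Ωᶜ → s E = 0

/-- `s` is the measure `Φ^g_{Ω,τ}`. -/
def IsDirVarMeasure (Ω : Set (Euc n)) (τ : Euc n) (g : Euc n → ℝ) (s : SignedMeasure (Euc n)) :
    Prop :=
  VanishesOff Ω s ∧
  ∀ φ : Euc n → ℝ, IsTestFun Ω φ →
    ∫ x in Ω, g x * fderiv ℝ φ x τ = - sintegral s φ

/-- `g ∈ BV(Ω,τ)`. -/
def MemBVDir (Ω : Set (Euc n)) (τ : Euc n) (g : Euc n → ℝ) : Prop :=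
  LocallyIntegrableOn g Ω volume ∧ ∃ s, IsDirVarMeasure Ω τ g s

/-- `g ∈ BV(Ω)`. -/
def MemBV (Ω : Set (Euc n)) (g : Euc n → ℝ) : Prop :=
  LocallyIntegrableOn g Ω volume ∧
  ∃ s : Fin n → SignedMeasure (Euc n), (∀ i, VanishesOff Ω (s i)) ∧
    ∀ ψ : Euc n → Euc n, IsTestField Ω ψ →
      ∫ x in Ω, g x * divg ψ x = - ∑ i, sintegral (s i) (fun x => ψ x i)

/-- Total variation `‖Φ‖` of an `ℝⁿ`-valued Borel measure given by components `Φ i`. -/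
def vecTotalVariation (Φ : Fin n → SignedMeasure (Euc n)) : ℝ≥0∞ :=
  ⨆ (P : ℕ → Set (Euc n)) (_ : ∀ i, MeasurableSet (P i))
    (_ : Pairwise (Function.onFun Disjoint P)),
    ∑' i, ENNReal.ofReal (Real.sqrt (∑ j, (Φ j (P i))^2))

/-! For a test function `φ`, the map `τ ↦ ∫_Ω χ_A ∂_τ φ` is linear. Hence `P_{Ω,τ}(A)`, a
supremum of such functionals over a family closed under `φ ↦ -φ`, is finite exactly on a linear
subspace `V`. Testing the perimeter with a vector field `ψ` splits `∫_Ω χ_A div ψ` into the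
directional variations of the components `ψ_i` along the coordinate vectors, so
`P_Ω(A) ≤ ∑ᵢ P_{Ω,eᵢ}(A)`. Thus `P_Ω(A) = ∞` forces `V ≠ ℝⁿ`, and a proper subspace lies in a
hyperplane. If `A ∩ Ω` is not measurable, every `P_{Ω,τ}(A)` is infinite. -/

namespace Submodule

variable {K V : Type*} [Field K] [AddCommGroup V] [Module K V] [FiniteDimensional K V]

theorem exists_le_finrank_eq_sub_one_of_ne_top {p : Submodule K V} (hp : p ≠ ⊤) :
    ∃ W : Submodule K V, p ≤ W ∧ Module.finrank K W = Module.finrank K V - 1 := by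
  obtain ⟨f, hf, hpf⟩ := p.exists_le_ker_of_lt_top hp.lt_top
  refine ⟨LinearMap.ker f, hpf, ?_⟩
  have := Module.Dual.finrank_ker_add_one_of_ne_zero hf
  omega

end Submodule

section SupOfFunctionals

variable {ι E : Type*} [AddCommGroup E] [Module ℝ E] (S : Set ι) (ℓ : ι → E →ₗ[ℝ] ℝ)

theorem biSup_ofReal_map_add_le (x y : E) :
    ⨆ i ∈ S, ENNReal.ofReal (ℓ i (x + y))
      ≤ (⨆ i ∈ S, ENNReal.ofReal (ℓ i x)) + ⨆ i ∈ S, ENNReal.ofReal (ℓ i y) :=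
  iSup₂_le fun i hi => by
    rw [map_add]
    exact ENNReal.ofReal_add_le.trans (add_le_add (le_iSup₂_of_le i hi le_rfl)
      (le_iSup₂_of_le i hi le_rfl))

variable {S ℓ}

theorem ofReal_abs_le_biSup (hS : ∀ i ∈ S, ∃ j ∈ S, ℓ j = -ℓ i) {i : ι} (hi : i ∈ S) (x : E) :
    ENNReal.ofReal |ℓ i x| ≤ ⨆ i ∈ S, ENNReal.ofReal (ℓ i x) := by
  obtain ⟨j, hj, hji⟩ := hS i hi
  rcases abs_cases (ℓ i x) with ⟨h, -⟩ | ⟨h, -⟩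
  · rw [h]
    exact le_iSup₂_of_le i hi le_rfl
  · exact le_iSup₂_of_le j hj (by rw [h, hji, LinearMap.neg_apply])

theorem biSup_ofReal_map_smul_le (hS : ∀ i ∈ S, ∃ j ∈ S, ℓ j = -ℓ i) (c : ℝ) (x : E) :
    ⨆ i ∈ S, ENNReal.ofReal (ℓ i (c • x))
      ≤ ENNReal.ofReal |c| * ⨆ i ∈ S, ENNReal.ofReal (ℓ i x) :=
  iSup₂_le fun i hi => calc
    ENNReal.ofReal (ℓ i (c • x)) ≤ ENNReal.ofReal (|c| * |ℓ i x|) := by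
      rw [map_smul, smul_eq_mul, ← abs_mul]
      exact ENNReal.ofReal_le_ofReal (le_abs_self _)
    _ = ENNReal.ofReal |c| * ENNReal.ofReal |ℓ i x| := ENNReal.ofReal_mul (abs_nonneg c)
    _ ≤ _ := by gcongr; exact ofReal_abs_le_biSup hS hi x

variable (S ℓ)

/-- Closure of the family under negation makes `⨆ i ∈ S, ofReal (ℓ i x) < ⊤` say that `|ℓ i x|`
is bounded on `S`, a linear condition on `x`. -/
def boundedSupSubmodule (hS : ∀ i ∈ S, ∃ j ∈ S, ℓ j = -ℓ i) : Submodule ℝ E where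
  carrier := {x | ⨆ i ∈ S, ENNReal.ofReal (ℓ i x) < ⊤}
  add_mem' {x y} hx hy :=
    (biSup_ofReal_map_add_le S ℓ x y).trans_lt (ENNReal.add_lt_top.2 ⟨hx, hy⟩)
  zero_mem' := by simp
  smul_mem' c x hx :=
    (biSup_ofReal_map_smul_le hS c x).trans_lt (ENNReal.mul_lt_top ENNReal.ofReal_lt_top hx)

end SupOfFunctionals

theorem ENNReal.ofReal_sum_le {ι : Type*} (s : Finset ι) (f : ι → ℝ) :
    ENNReal.ofReal (∑ i ∈ s, f i) ≤ ∑ i ∈ s, ENNReal.ofReal (f i) := by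
  classical
  induction s using Finset.induction_on with
  | empty => simp
  | insert i s hi ih =>
    rw [Finset.sum_insert hi, Finset.sum_insert hi]
    exact ENNReal.ofReal_add_le.trans (add_le_add_right ih _)

section DirectionalVariation

variable {Ω A : Set (Euc n)}

theorem integrable_indicator_fderiv (hΩ : NullMeasurableSet Ω) (hA : NullMeasurableSet (A ∩ Ω))
    {φ : Euc n → ℝ} (hφ : ContDiff ℝ 1 φ) (hc : HasCompactSupport φ) :
    Integrable (A.indicator (fderiv ℝ φ)) (volume.restrict Ω) :=
  ((hφ.continuous_fderiv one_ne_zero).integrable_of_hasCompactSupport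
    (hc.fderiv (𝕜 := ℝ))).restrict.indicator₀ ((nullMeasurableSet_restrict hΩ).2 hA)

theorem setIntegral_indicator_mul_fderiv (hΩ : NullMeasurableSet Ω)
    (hA : NullMeasurableSet (A ∩ Ω)) {φ : Euc n → ℝ} (hφ : ContDiff ℝ 1 φ)
    (hc : HasCompactSupport φ) (τ : Euc n) :
    ∫ x in Ω, A.indicator (fun _ => (1:ℝ)) x * fderiv ℝ φ x τ
      = (∫ x in Ω, A.indicator (fderiv ℝ φ) x) τ := by
  rw [ContinuousLinearMap.integral_apply (integrable_indicator_fderiv hΩ hA hφ hc)]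
  congr with x
  by_cases hx : x ∈ A <;> simp [hx]

def unitTestFuns (Ω : Set (Euc n)) : Set (Euc n → ℝ) := {φ | IsTestFun Ω φ ∧ ∀ x, |φ x| ≤ 1}

theorem neg_mem_unitTestFuns {φ : Euc n → ℝ} (hφ : φ ∈ unitTestFuns Ω) :
    -φ ∈ unitTestFuns Ω := by
  obtain ⟨⟨hsmooth, hc, hsupp⟩, hle⟩ := hφ
  exact ⟨⟨hsmooth.neg, hc.neg, by rwa [tsupport_neg]⟩, fun x => by simpa using hle x⟩

theorem dirVar_eq_biSup (hΩ : NullMeasurableSet Ω) (hA : NullMeasurableSet (A ∩ Ω))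
    (τ : Euc n) :
    dirVar Ω A τ = ⨆ φ ∈ unitTestFuns Ω,
      ENNReal.ofReal ((∫ x in Ω, A.indicator (fderiv ℝ φ) x) τ) := by
  rw [dirVar, if_pos hA]
  refine iSup_congr fun φ => iSup_congr fun hφ => ?_
  rw [setIntegral_indicator_mul_fderiv hΩ hA (hφ.1.1.of_le (by simp)) hφ.1.2.1]

theorem dirVar_eq_top_of_not_nullMeasurableSet (hA : ¬NullMeasurableSet (A ∩ Ω)) (τ : Euc n) :
    dirVar Ω A τ = ⊤ :=
  if_neg hA

theorem exists_neg_setIntegral_indicator_fderiv {φ : Euc n → ℝ} (hφ : φ ∈ unitTestFuns Ω) :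
    ∃ ψ ∈ unitTestFuns Ω, (∫ x in Ω, A.indicator (fderiv ℝ ψ) x)
      = -∫ x in Ω, A.indicator (fderiv ℝ φ) x :=
  ⟨-φ, neg_mem_unitTestFuns hφ, by
    rw [show fderiv ℝ (-φ) = -fderiv ℝ φ from funext fun _ => fderiv_neg, indicator_neg']
    exact integral_neg _⟩

variable (Ω A) in
def finiteDirVarSubmodule : Submodule ℝ (Euc n) :=
  boundedSupSubmodule (unitTestFuns Ω)
    (fun φ => ((∫ x in Ω, A.indicator (fderiv ℝ φ) x : Euc n →L[ℝ] ℝ) : Euc n →ₗ[ℝ] ℝ))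
    fun _ hφ => by
      obtain ⟨ψ, hψ, hneg⟩ := exists_neg_setIntegral_indicator_fderiv (A := A) hφ
      exact ⟨ψ, hψ, by rw [hneg]; rfl⟩

theorem mem_finiteDirVarSubmodule (hΩ : NullMeasurableSet Ω) (hA : NullMeasurableSet (A ∩ Ω))
    {τ : Euc n} : τ ∈ finiteDirVarSubmodule Ω A ↔ dirVar Ω A τ < ⊤ := by
  rw [dirVar_eq_biSup hΩ hA]
  rfl

theorem fderiv_component_apply {ψ : Euc n → Euc n} {x : Euc n} (hψ : DifferentiableAt ℝ ψ x)
    (i : Fin n) (v : Euc n) : fderiv ℝ (fun y => ψ y i) x v = fderiv ℝ ψ x v i :=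
  congrArg (· v) ((EuclideanSpace.proj i).hasFDerivAt.comp x hψ.hasFDerivAt).fderiv

theorem component_mem_unitTestFuns {ψ : Euc n → Euc n} (hψ : IsTestField Ω ψ)
    (hle : ∀ x, ‖ψ x‖ ≤ 1) (i : Fin n) : (fun x => ψ x i) ∈ unitTestFuns Ω :=
  ⟨⟨(EuclideanSpace.proj (𝕜 := ℝ) i).contDiff.comp hψ.1,
      hψ.2.1.comp_left (g := fun y : Euc n => y i) rfl,
      (tsupport_comp_subset (g := fun y : Euc n => y i) rfl ψ).trans hψ.2.2⟩,
    fun x => (PiLp.norm_apply_le (ψ x) i).trans (hle x)⟩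

theorem perim_le_sum_dirVar (hΩ : NullMeasurableSet Ω) (hA : NullMeasurableSet (A ∩ Ω)) :
    perim Ω A ≤ ∑ i : Fin n, dirVar Ω A (EuclideanSpace.single i 1) := by
  rw [perim, if_pos hA]
  refine iSup₂_le fun ψ ⟨hψ, hle⟩ => ?_
  set e : Fin n → Euc n := fun i => EuclideanSpace.single i 1
  have hcomp := component_mem_unitTestFuns hψ hle
  have hint i := integrable_indicator_fderiv (A := A) hΩ hA ((hcomp i).1.1.of_le (by simp))
    (hcomp i).1.2.1
  have hdiv : ∫ x in Ω, A.indicator (fun _ => (1:ℝ)) x * divg ψ x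
      = ∑ i, (∫ x in Ω, A.indicator (fderiv ℝ fun y => ψ y i) x) (e i) := by
    simp_rw [ContinuousLinearMap.integral_apply (hint _)]
    rw [← integral_finsetSum _ fun i _ => (hint i).apply_continuousLinearMap (e i)]
    congr with x
    have hdiff : DifferentiableAt ℝ ψ x := hψ.1.differentiable (by simp) x
    by_cases hx : x ∈ A <;> simp [hx, divg, e, fderiv_component_apply hdiff]
  rw [hdiv]
  refine (ENNReal.ofReal_sum_le _ _).trans (Finset.sum_le_sum fun i _ => ?_)
  rw [dirVar_eq_biSup hΩ hA]
  exact le_iSup₂_of_le (fun y => ψ y i) (hcomp i) le_rfl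

end DirectionalVariation

theorem finite_dirVar_directions_subset_hyperplane_general
    {n : ℕ} (hn : 1 ≤ n) (Ω : Set (Euc n)) (hΩ : IsOpen Ω)
    (A : Set (Euc n)) (h : perim Ω A = ⊤) :
    ∃ W : Submodule ℝ (Euc n), Module.finrank ℝ W = n - 1 ∧
      {τ : Euc n | dirVar Ω A τ < ⊤} ⊆ (W : Set (Euc n)) := by
  have hΩ' : NullMeasurableSet Ω := hΩ.measurableSet.nullMeasurableSet
  by_cases hA : NullMeasurableSet (A ∩ Ω) volume
  · have hne : finiteDirVarSubmodule Ω A ≠ ⊤ := fun htop => by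
      refine h.not_lt ((perim_le_sum_dirVar hΩ' hA).trans_lt (ENNReal.sum_lt_top.2 fun i _ => ?_))
      exact (mem_finiteDirVarSubmodule hΩ' hA).1 (htop ▸ Submodule.mem_top)
    obtain ⟨W, hle, hW⟩ := Submodule.exists_le_finrank_eq_sub_one_of_ne_top hne
    exact ⟨W, by simpa using hW, fun τ hτ => hle ((mem_finiteDirVarSubmodule hΩ' hA).2 hτ)⟩
  · have : Nonempty (Fin n) := ⟨⟨0, hn⟩⟩
    obtain ⟨W, -, hW⟩ := Submodule.exists_le_finrank_eq_sub_one_of_ne_top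
      (bot_ne_top : (⊥ : Submodule ℝ (Euc n)) ≠ ⊤)
    refine ⟨W, by simpa using hW, fun τ hτ => ?_⟩
    simp [dirVar_eq_top_of_not_nullMeasurableSet hA] at hτ

/-- If `P_Ω(A) = ∞` then the set of directions `τ` with
`P_{Ω,τ}(A) < ∞` lies in an `(n-1)`-dimensional linear subspace. -/
theorem finite_dirVar_directions_subset_hyperplane
    {n : ℕ} (hn : 1 ≤ n) (Ω : Set (Euc n)) (hΩ : IsOpen Ω) (hne : Ω.Nonempty)
    (A : Set (Euc n)) (h : perim Ω A = ⊤) :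
    ∃ W : Submodule ℝ (Euc n), Module.finrank ℝ W = n - 1 ∧
      {τ : Euc n | dirVar Ω A τ < ⊤} ⊆ (W : Set (Euc n)) :=
  finite_dirVar_directions_subset_hyperplane_general hn Ω hΩ A h

end
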